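/- There exist 50 points p₁, …, p₅₀ in the unit square [0,1]² ⊆ ℝ² such that ‖pᵢ − pⱼ‖ ≥ 0.166 for all i ≠ j. -/

import Mathlib

/-!
The 50 points lie on the grid `(ℤ / 10000)²`, so containment in the square and the separation
`1660² ≤ |qᵢ - qⱼ|²` are finite computations with integers; rescaling by `1 / 10000` turns them
into the statement.
-/

open Set

noncomputable def gridPoint (N : ℕ) (q : ℤ × ℤ) : EuclideanSpace ℝ (Fin 2) :=
  !₂[q.1 / N, q.2 / N]

def intSqDist (q q' : ℤ × ℤ) : ℤ :=
  (q.1 - q'.1) ^ 2 + (q.2 - q'.2) ^ 2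

lemma div_natCast_mem_Icc {N : ℕ} {a : ℤ} (hN : 0 < N) (ha : a ∈ Icc (0 : ℤ) N) :
    (a / N : ℝ) ∈ Icc (0 : ℝ) 1 := by
  have hN' : (0 : ℝ) < N := by exact_mod_cast hN
  obtain ⟨ha₀, haN⟩ := ha
  refine ⟨div_nonneg (by exact_mod_cast ha₀) hN'.le, (div_le_one hN').2 ?_⟩
  exact_mod_cast haN

lemma gridPoint_mem_Icc {N : ℕ} (hN : 0 < N) {q : ℤ × ℤ}
    (hq : q.1 ∈ Icc (0 : ℤ) N ∧ q.2 ∈ Icc (0 : ℤ) N) (t : Fin 2) :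
    gridPoint N q t ∈ Icc (0 : ℝ) 1 := by
  fin_cases t
  · exact div_natCast_mem_Icc hN hq.1
  · exact div_natCast_mem_Icc hN hq.2

lemma norm_gridPoint_sub (N : ℕ) (q q' : ℤ × ℤ) :
    ‖gridPoint N q - gridPoint N q'‖ = √(intSqDist q q' : ℝ) / N := by
  have hsq : ‖gridPoint N q - gridPoint N q'‖ ^ 2 = (intSqDist q q' : ℝ) / N ^ 2 := by
    rw [EuclideanSpace.norm_sq_eq, Fin.sum_univ_two]
    simp only [gridPoint, PiLp.sub_apply, Real.norm_eq_abs, sq_abs, intSqDist,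
      Matrix.cons_val_zero, Matrix.cons_val_one]
    push_cast
    ring
  rw [← Real.sqrt_sq (norm_nonneg _), hsq, Real.sqrt_div' _ (by positivity),
    Real.sqrt_sq (Nat.cast_nonneg N)]

lemma le_norm_gridPoint_sub {N m : ℕ} {q q' : ℤ × ℤ} (h : (m : ℤ) ^ 2 ≤ intSqDist q q') :
    (m / N : ℝ) ≤ ‖gridPoint N q - gridPoint N q'‖ := by
  rw [norm_gridPoint_sub]
  refine div_le_div_of_nonneg_right ((Real.le_sqrt (Nat.cast_nonneg m) ?_).2 ?_) (Nat.cast_nonneg N)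
  · exact_mod_cast (sq_nonneg _).trans h
  · exact_mod_cast h

theorem exists_unit_square_points_of_grid {n N m : ℕ} (hN : 0 < N) (q : Fin n → ℤ × ℤ)
    (hq : ∀ i, (q i).1 ∈ Icc (0 : ℤ) N ∧ (q i).2 ∈ Icc (0 : ℤ) N)
    (hsep : ∀ i j, i ≠ j → (m : ℤ) ^ 2 ≤ intSqDist (q i) (q j)) :
    ∃ p : Fin n → EuclideanSpace ℝ (Fin 2),
      (∀ i, ∀ t : Fin 2, p i t ∈ Icc (0 : ℝ) 1) ∧
      ∀ i j, i ≠ j → (m / N : ℝ) ≤ ‖p i - p j‖ :=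
  ⟨fun i => gridPoint N (q i), fun i => gridPoint_mem_Icc hN (hq i),
    fun i j hij => le_norm_gridPoint_sub (hsep i j hij)⟩

def packing50Grid : List (ℤ × ℤ) :=
  [(1439, 1549), (8560, 7504), (1441, 3214), (4320, 1547), (4243, 3334), (7122, 3333),
    (5376, 10000), (8562, 4165), (5683, 2501), (2803, 4168), (7042, 10000), (2046, 0),
    (5376, 0), (0, 5954), (1441, 6786), (3710, 10000), (8522, 766), (2046, 10000),
    (5683, 4167), (8522, 9234), (4243, 5000), (0, 2382), (2803, 5832), (7120, 1662),
    (7042, 0), (1363, 5000), (4320, 8453), (5683, 7499), (2880, 7620), (0, 4046),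
    (10000, 10000), (7122, 6667), (7120, 8338), (2, 10000), (8562, 5835), (7123, 5000),
    (4243, 6666), (0, 7618), (10000, 3328), (10000, 1664), (8560, 2496), (10000, 5000),
    (10000, 0), (1439, 8451), (5683, 5833), (0, 459), (3710, 0), (10000, 8336),
    (10000, 6672), (2880, 2380)]

def packing50 (i : Fin 50) : ℤ × ℤ := packing50Grid.getD i (0, 0)

lemma packing50_mem_box (i : Fin 50) :
    (packing50 i).1 ∈ Icc (0 : ℤ) 10000 ∧ (packing50 i).2 ∈ Icc (0 : ℤ) 10000 := by
  revert i
  simp only [mem_Icc]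
  decide

lemma packing50_sep :
    ∀ i j : Fin 50, i ≠ j → (1660 : ℤ) ^ 2 ≤ intSqDist (packing50 i) (packing50 j) := by
  unfold intSqDist
  decide

/-- There exist 50 points in the unit square `[0,1]²` with all pairwise
Euclidean distances at least 0.166 (point-spreading form of the improved
packing of 50 equal disks in a square). -/
theorem packing_50_disks :
    ∃ p : Fin 50 → EuclideanSpace ℝ (Fin 2),
      (∀ i, ∀ t : Fin 2, p i t ∈ Set.Icc (0 : ℝ) 1) ∧
      ∀ i j, i ≠ j → (0.166 : ℝ) ≤ ‖p i - p j‖ := by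
  have h0166 : (0.166 : ℝ) = (1660 : ℕ) / (10000 : ℕ) := by norm_num
  rw [h0166]
  exact exists_unit_square_points_of_grid (by norm_num) packing50 packing50_mem_box packing50_sep
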